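/- Let X and Y be subsets of the ground set of a matroid M. Then ⊓_M(X,Y) ≥ r_M(X ∩ Y) in ℕ∞ = ℕ ∪ {∞}. Moreover, if ⊓_M(X,Y) < ∞, then equality ⊓_M(X,Y) = r_M(X ∩ Y) holds if and only if (X,Y) is a modular pair in M. -/

import Mathlib

/-!
Choose a basis `K` of `X ∩ Y` and extend it to bases `I' ⊇ K` of `X` and `J' ⊇ K` of `Y`.
Then `I' ∩ J' = K`, so at `(I', J')` the quantity `|I ∩ J| + n(I ∪ J)` is
`r(X ∩ Y) + n(I' ∪ J')`. It does not depend on the chosen bases: if `B` is a basis of `J \ X`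
in `M ／ X`, then `I ∪ B` is a basis of `I ∪ J` for every basis `I` of `X`, and the quantity equals
`|J ∩ X| + |J \ X \ B|`. When it is finite, equality with `r(X ∩ Y)` means `I' ∪ J'` is
independent, and then it is a mutual basis. Conversely, a mutual basis `B` supplies the bases
`X ∩ B` and `Y ∩ B`, whose union is independent and whose intersection is an independent subset
of `X ∩ Y`.
-/

open Set

namespace Matroid

variable {α : Type*} {ι : Type*}

/-- The deletion of a set `D` of elements from `M`. -/
def delete' (M : Matroid α) (D : Set α) : Matroid α := M ↾ (M.E \ D)

/-- The contraction of a set `C` of elements from `M`, defined as the dual of the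
deletion of `C` from the dual. -/
def contract' (M : Matroid α) (C : Set α) : Matroid α := (M✶.delete' C)✶

/-- A circuit of `M` is a minimal dependent subset of the ground set. -/
def Circuit (M : Matroid α) (C : Set α) : Prop :=
  C ⊆ M.E ∧ ¬ M.Indep C ∧ ∀ I, I ⊂ C → M.Indep I

/-- The rank of a set `X` in `M`, valued in `ℕ∞`. It is the supremum of the `encard`s of
the independent subsets of `X`; equivalently, the `encard` of any basis of `X`. -/
noncomputable def eRk' (M : Matroid α) (X : Set α) : ℕ∞ :=
  ⨆ I : {I : Set α // M.Indep I ∧ I ⊆ X}, I.1.encard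

/-- The rank of the matroid `M`, valued in `ℕ∞`. -/
noncomputable def eRank' (M : Matroid α) : ℕ∞ := M.eRk' M.E

/-- The nullity of a set `X` in `M`, valued in `ℕ∞` : the corank of the restriction
of `M` to `X`. -/
noncomputable def nullity (M : Matroid α) (X : Set α) : ℕ∞ := (M ↾ X)✶.eRank'

/-- The relative rank of `Y` with respect to `X` : the rank of `Y \ X` in `M / X`. -/
noncomputable def eRelRk (M : Matroid α) (X Y : Set α) : ℕ∞ := (M.contract' X).eRk' (Y \ X)

/-- `B` is a mutual basis in `M` for the indexed set family `X` if `B` is independent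
and `X i ∩ B` is a basis of `X i` in `M` for each index `i`. -/
def IsMutualBasis (M : Matroid α) (B : Set α) (X : ι → Set α) : Prop :=
  M.Indep B ∧ ∀ i, M.IsBasis (X i ∩ B) (X i)

/-- An indexed set family is modular in `M` if it has a mutual basis. -/
def IsModularFamily (M : Matroid α) (X : ι → Set α) : Prop := ∃ B, M.IsMutualBasis B X

/-- `B` is a mutual basis in `M` for the collection `𝓧` of sets if `B` is independent
and `X ∩ B` is a basis of `X` in `M` for each `X ∈ 𝓧`. -/
def IsMutualBasisSet (M : Matroid α) (B : Set α) (𝓧 : Set (Set α)) : Prop :=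
  M.Indep B ∧ ∀ X ∈ 𝓧, M.IsBasis (X ∩ B) X

/-- A collection of sets is modular in `M` if it has a mutual basis. -/
def IsModularSetFamily (M : Matroid α) (𝓧 : Set (Set α)) : Prop :=
  ∃ B, M.IsMutualBasisSet B 𝓧

/-- `(X, Y)` is a modular pair in `M` if `{X, Y}` has a mutual basis. -/
def IsModularPair (M : Matroid α) (X Y : Set α) : Prop := M.IsModularSetFamily {X, Y}

/-- A flat `F` of `M` is modular if it forms a modular pair with every flat of `M`. -/
def IsModularFlat (M : Matroid α) (F : Set α) : Prop :=
  M.IsFlat F ∧ ∀ G, M.IsFlat G → M.IsModularPair F G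

/-- A matroid is modular if every flat is modular. -/
def Modular (M : Matroid α) : Prop := ∀ F, M.IsFlat F → M.IsModularFlat F

/-- An indexed family of sets is skew in `M` if it is modular in `M`, and the
intersection of any two distinct members consists of loops. -/
def IsSkewFamily (M : Matroid α) (X : ι → Set α) : Prop :=
  M.IsModularFamily X ∧ ∀ ⦃i j⦄, i ≠ j → X i ∩ X j ⊆ M.closure ∅

/-- A modular cut of `M` : a collection of flats that is up-closed, closed under
intersections of modular pairs, and closed under intersections of infinite
modular chains. -/
def IsModularCut (M : Matroid α) (𝓕 : Set (Set α)) : Prop :=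
  (∀ F ∈ 𝓕, M.IsFlat F) ∧
  (∀ F F', F ∈ 𝓕 → M.IsFlat F' → F ⊆ F' → F' ∈ 𝓕) ∧
  (∀ F F', F ∈ 𝓕 → F' ∈ 𝓕 → M.IsModularPair F F' → F ∩ F' ∈ 𝓕) ∧
  (∀ 𝓒 ⊆ 𝓕, 𝓒.Infinite → IsChain (· ⊆ ·) 𝓒 → M.IsModularSetFamily 𝓒 → ⋂₀ 𝓒 ∈ 𝓕)

/-- `N` is a quotient of `M` if they have the same ground set, and every set's closure
in `M` is contained in its closure in `N`. -/
def IsQuotient (N M : Matroid α) : Prop := N.E = M.E ∧ ∀ X, M.closure X ⊆ N.closure X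

/-- A hyperplane of `M` is a maximal proper flat of `M`. -/
def Hyperplane (M : Matroid α) (H : Set α) : Prop :=
  M.IsFlat H ∧ H ≠ M.E ∧ ∀ F, M.IsFlat F → H ⊂ F → F = M.E

/-- The discrepancy of the pair `(N, M)` : the minimum of `(B \ B₀).encard` over all
`(N,M)`-basis pairs, i.e. pairs `(B₀, B)` where `B₀` is a base of `N`, `B` is a base
of `M` and `B₀ ⊆ B`. -/
noncomputable def discrepancy (N M : Matroid α) : ℕ∞ :=
  ⨅ p : {p : Set α × Set α // N.IsBase p.1 ∧ M.IsBase p.2 ∧ p.1 ⊆ p.2},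
    (p.1.2 \ p.1.1).encard

section

variable {M : Matroid α} {B I I' J J' X Y : Set α}

lemma eRk'_eq_eRk (M : Matroid α) (X : Set α) : M.eRk' X = M.eRk X := by
  refine le_antisymm (iSup_le fun I ↦ I.2.1.encard_le_eRk_of_subset I.2.2) ?_
  obtain ⟨I, hI⟩ := M.exists_isBasis' X
  rw [← hI.encard_eq_eRk]
  exact le_iSup (fun I : {I : Set α // M.Indep I ∧ I ⊆ X} ↦ I.1.encard) ⟨I, hI.indep, hI.subset⟩

lemma IsBasis.nullity_eq (hI : M.IsBasis I X) : M.nullity X = (X \ I).encard := by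
  rw [nullity, eRank', eRk'_eq_eRk, eRk_ground,
    ← hI.isBase_restrict.compl_isBase_dual.encard_eq_eRank, restrict_ground_eq]

lemma nullity_eq_zero_iff (hX : X ⊆ M.E) : M.nullity X = 0 ↔ M.Indep X := by
  obtain ⟨I, hI⟩ := M.exists_isBasis X hX
  rw [hI.nullity_eq, encard_eq_zero, sdiff_eq_empty]
  exact ⟨hI.indep.subset, fun hX ↦ (hI.eq_of_subset_indep hX hI.subset Subset.rfl).symm.subset⟩

lemma IsBasis.union_isBasis_union_of_contract_isBasis (hI : M.IsBasis I X)
    (hB : (M ／ X).IsBasis B (J \ X)) : M.IsBasis (I ∪ B) (I ∪ J) := by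
  have hIB : M.Indep (I ∪ B) := union_comm B I ▸ (hI.contract_indep_iff.1 hB.indep).1
  refine hIB.isBasis_of_subset_of_subset_closure
    (union_subset_union_right I (hB.subset.trans sdiff_subset)) (union_subset
      (subset_union_left.trans (M.subset_closure _ hIB.subset_ground)) fun e heJ ↦ ?_)
  have hcl : M.closure (B ∪ X) = M.closure (I ∪ B) := by
    rw [union_comm I, closure_union_congr_right hI.closure_eq_closure]
  by_cases heX : e ∈ X
  · exact M.closure_subset_closure subset_union_left (hI.subset_closure heX)
  · have := hB.subset_closure ⟨heJ, heX⟩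
    rw [contract_closure_eq, hcl] at this
    exact this.1

lemma IsBasis.encard_inter_add_nullity_eq (hI : M.IsBasis I X)
    (hB : (M ／ X).IsBasis B (J \ X)) :
    (I ∩ J).encard + M.nullity (I ∪ J) = (J ∩ X).encard + ((J \ X) \ B).encard := by
  have hBJ : B ⊆ J \ X := hB.subset
  have hIX : I ⊆ X := hI.subset
  have hdiff : (I ∪ J) \ (I ∪ B) = ((J ∩ X) \ I) ∪ ((J \ X) \ B) := by
    tauto_set
  have hinter : I ∩ J = (J ∩ X) ∩ I := by tauto_set
  have hdisj : Disjoint ((J ∩ X) \ I) ((J \ X) \ B) := by tauto_set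
  rw [(hI.union_isBasis_union_of_contract_isBasis hB).nullity_eq, hdiff,
    encard_union_eq hdisj, ← add_assoc, hinter, add_comm (J ∩ X ∩ I).encard,
    encard_sdiff_add_encard_inter]

lemma IsBasis.encard_inter_add_nullity_congr_left (hI : M.IsBasis I X) (hI' : M.IsBasis I' X)
    (hJ : J ⊆ M.E) :
    (I ∩ J).encard + M.nullity (I ∪ J) = (I' ∩ J).encard + M.nullity (I' ∪ J) := by
  obtain ⟨B, hB⟩ := (M ／ X).exists_isBasis (J \ X) (sdiff_subset_sdiff_left hJ)
  rw [hI.encard_inter_add_nullity_eq hB, hI'.encard_inter_add_nullity_eq hB]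

lemma IsBasis.encard_inter_add_nullity_congr (hI : M.IsBasis I X) (hI' : M.IsBasis I' X)
    (hJ : M.IsBasis J Y) (hJ' : M.IsBasis J' Y) :
    (I ∩ J).encard + M.nullity (I ∪ J) = (I' ∩ J').encard + M.nullity (I' ∪ J') := by
  rw [hI.encard_inter_add_nullity_congr_left hI' hJ.indep.subset_ground, inter_comm, union_comm,
    hJ.encard_inter_add_nullity_congr_left hJ' hI'.indep.subset_ground, inter_comm, union_comm]

lemma isModularPair_of_indep_union (hI : M.IsBasis I X) (hJ : M.IsBasis J Y)
    (h : M.Indep (I ∪ J)) : M.IsModularPair X Y := by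
  refine ⟨I ∪ J, h, ?_⟩
  rintro Z (rfl | rfl)
  · rwa [inter_comm, hI.inter_eq_of_subset_indep subset_union_left h]
  · rwa [inter_comm, hJ.inter_eq_of_subset_indep subset_union_right h]

lemma IsModularPair.encard_inter_add_nullity_le (h : M.IsModularPair X Y) (hI : M.IsBasis I X)
    (hJ : M.IsBasis J Y) : (I ∩ J).encard + M.nullity (I ∪ J) ≤ M.eRk (X ∩ Y) := by
  obtain ⟨B, hB, hBXY⟩ := h
  have hBX := hBXY X (.inl rfl)
  have hBY := hBXY Y (.inr rfl)
  have hBi : M.Indep (X ∩ B ∪ Y ∩ B) :=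
    hB.subset (union_subset inter_subset_right inter_subset_right)
  rw [hI.encard_inter_add_nullity_congr hBX hJ hBY, (nullity_eq_zero_iff hBi.subset_ground).2 hBi,
    add_zero]
  exact (hB.subset (inter_subset_left.trans inter_subset_right)).encard_le_eRk_of_subset
    (inter_subset_inter inter_subset_left inter_subset_left)

end

/-- The local connectivity of `X` and `Y` (computed as
`|I ∩ J| + n (I ∪ J)` for bases `I` of `X` and `J` of `Y`) is at least `r (X ∩ Y)`,
and if it is finite, then equality holds iff `(X, Y)` is a modular pair in `M`. -/
theorem eRk_inter_le_eLocalConn (M : Matroid α) {X Y I J : Set α}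
    (hI : M.IsBasis I X) (hJ : M.IsBasis J Y) :
    M.eRk' (X ∩ Y) ≤ (I ∩ J).encard + M.nullity (I ∪ J) ∧
      ((I ∩ J).encard + M.nullity (I ∪ J) < ⊤ →
        ((I ∩ J).encard + M.nullity (I ∪ J) = M.eRk' (X ∩ Y) ↔ M.IsModularPair X Y)) := by
  obtain ⟨K, hK⟩ := M.exists_isBasis (X ∩ Y) (inter_subset_left.trans hI.subset_ground)
  obtain ⟨I', hI', hKI'⟩ := hK.indep.subset_isBasis_of_subset (hK.subset.trans inter_subset_left)
  obtain ⟨J', hJ', hKJ'⟩ := hK.indep.subset_isBasis_of_subset (hK.subset.trans inter_subset_right)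
  have hI'J' : I' ∩ J' = K := (hK.eq_of_subset_indep (hI'.indep.inter_right J')
    (subset_inter hKI' hKJ') (inter_subset_inter hI'.subset hJ'.subset)).symm
  have hconn : (I ∩ J).encard + M.nullity (I ∪ J) = K.encard + M.nullity (I' ∪ J') := by
    rw [hI.encard_inter_add_nullity_congr hI' hJ hJ', hI'J']
  have hle : K.encard ≤ (I ∩ J).encard + M.nullity (I ∪ J) := hconn ▸ le_self_add
  rw [eRk'_eq_eRk, ← hK.encard_eq_eRk]
  refine ⟨hle, fun hfin ↦ ⟨fun heq ↦ ?_, fun hmod ↦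
    le_antisymm (hK.encard_eq_eRk ▸ hmod.encard_inter_add_nullity_le hI hJ) hle⟩⟩
  rw [hconn] at hfin heq
  have hnull : M.nullity (I' ∪ J') = 0 :=
    (WithTop.add_left_inj (ne_top_of_le_ne_top hfin.ne le_self_add)).1 (heq.trans (add_zero _).symm)
  exact isModularPair_of_indep_union hI' hJ'
    ((nullity_eq_zero_iff (union_subset hI'.indep.subset_ground hJ'.indep.subset_ground)).1 hnull)
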